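/- Let A be an algebra with mean value on ℝ^N. Then the spectrum Δ(A) (with the Arens/convolution product, when defined) is a topological group if and only if A is a closed subalgebra of the algebra AP(ℝ^N) of almost periodic functions. -/

import Mathlib

open MeasureTheory Filter Topology
open scoped ENNReal NNReal

noncomputable section

abbrev RN (N : ℕ) := Fin N → ℝ

/-- `f` is a bounded uniformly continuous function on `ℝ^N`. -/
def IsBUC {N : ℕ} (f : RN N → ℂ) : Prop :=
  Bornology.IsBounded (Set.range f) ∧ UniformContinuous f

/-- `f` has mean value `M`: the rescalings `x ↦ f (x/ε)` converge to the constant `M`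
weakly-* in `L∞(ℝ^N)`, i.e. tested against every integrable function. -/
def HasMeanValue {N : ℕ} (f : RN N → ℂ) (M : ℂ) : Prop :=
  ∀ φ : RN N → ℂ, Integrable φ →
    Tendsto (fun ε : ℝ => ∫ x, f (ε⁻¹ • x) * φ x) (𝓝[>] (0:ℝ)) (𝓝 (M * ∫ x, φ x))

/-- An algebra with mean value on `ℝ^N`: a closed (under uniform convergence)
subalgebra of BUC(ℝ^N) containing the constants, stable under complex conjugation,
translation invariant, all of whose elements possess a mean value. -/
structure MVAlgebra (N : ℕ) where
  carrier : Set (RN N → ℂ)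
  buc : ∀ f ∈ carrier, IsBUC f
  const_mem : ∀ c : ℂ, (fun _ => c) ∈ carrier
  add_mem : ∀ f ∈ carrier, ∀ g ∈ carrier, f + g ∈ carrier
  mul_mem : ∀ f ∈ carrier, ∀ g ∈ carrier, f * g ∈ carrier
  smul_mem : ∀ (c : ℂ), ∀ f ∈ carrier, c • f ∈ carrier
  conj_mem : ∀ f ∈ carrier, (fun x => (starRingEnd ℂ) (f x)) ∈ carrier
  translate_mem : ∀ f ∈ carrier, ∀ a : RN N, (fun x => f (x + a)) ∈ carrier
  closed : ∀ f : RN N → ℂ,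
    (∀ ε : ℝ, 0 < ε → ∃ g ∈ carrier, ∀ x, ‖f x - g x‖ ≤ ε) → f ∈ carrier
  mean_value : ∀ f ∈ carrier, ∃ M : ℂ, HasMeanValue f M

/-- A character of `A`: a multiplicative linear functional on `A`, nonzero
(normalized by `μ 1 = 1`), automatically bounded, extended by zero off `A`.
The set of characters is the spectrum `Δ(A)`. -/
def IsCharacter {N : ℕ} (A : MVAlgebra N) (μ : (RN N → ℂ) → ℂ) : Prop :=
  (∀ f ∈ A.carrier, ∀ g ∈ A.carrier, μ (f + g) = μ f + μ g) ∧
  (∀ (c : ℂ), ∀ f ∈ A.carrier, μ (c • f) = c * μ f) ∧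
  (∀ f ∈ A.carrier, ∀ g ∈ A.carrier, μ (f * g) = μ f * μ g) ∧
  μ (fun _ => (1:ℂ)) = 1 ∧
  (∀ f, f ∉ A.carrier → μ f = 0) ∧
  (∀ f ∈ A.carrier, ∀ C : ℝ, (∀ x, ‖f x‖ ≤ C) → ‖μ f‖ ≤ C)

/-- The spectrum `Δ(A)` of `A`, carrying the weak-* (pointwise convergence) topology. -/
abbrev Spectrum' {N : ℕ} (A : MVAlgebra N) :=
  {μ : (RN N → ℂ) → ℂ // IsCharacter A μ}

open Classical in
/-- The Dirac mass at `y`, as a functional (evaluation at `y` on `A`, zero off `A`). -/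
def diracFun {N : ℕ} (A : MVAlgebra N) (y : RN N) : (RN N → ℂ) → ℂ :=
  fun f => if f ∈ A.carrier then f y else 0

/-- `A` is introverted: `T_μ f (x) = μ (τ_x f)` belongs to `A` for every
character `μ` and every `f ∈ A`. -/
def Introverted {N : ℕ} (A : MVAlgebra N) : Prop :=
  ∀ μ : Spectrum' A, ∀ f ∈ A.carrier,
    (fun x => μ.1 (fun z => f (z + x))) ∈ A.carrier

/-- `mul` is the Arens product on `Δ(A)`: `(μν)(f) = μ (T_ν f)` where
`T_ν f (x) = ν (f (· + x))`. -/
def IsArensMul {N : ℕ} (A : MVAlgebra N)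
    (mul : Spectrum' A → Spectrum' A → Spectrum' A) : Prop :=
  ∀ μ ν : Spectrum' A, ∀ f ∈ A.carrier,
    (mul μ ν).1 f = μ.1 (fun x => ν.1 (fun z => f (z + x)))

/-- The kernel `K(Δ(A)) = ⋂_{s} s·Δ(A)` of the semigroup `Δ(A)`. -/
def kern {N : ℕ} {A : MVAlgebra N}
    (mul : Spectrum' A → Spectrum' A → Spectrum' A) : Set (Spectrum' A) :=
  ⋂ s : Spectrum' A, Set.range (mul s)

/-- The translate of a bounded continuous function. -/
def translateBCF {N : ℕ} (F : BoundedContinuousFunction (RN N) ℂ) (a : RN N) :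
    BoundedContinuousFunction (RN N) ℂ :=
  F.compContinuous ⟨fun x => x + a, by fun_prop⟩

/-- `f` is (Bohr) almost periodic: its orbit under translations is relatively
norm-compact in `BUC(ℝ^N)`. -/
def IsAP {N : ℕ} (f : RN N → ℂ) : Prop :=
  ∃ F : BoundedContinuousFunction (RN N) ℂ, ⇑F = f ∧
    IsCompact (closure (Set.range fun a : RN N => translateBCF F a))

/-!
Write `T_ν f (x) = ν (f (· + x))` (`ν.convolve f` below).

(⇐) If every `f ∈ A` is almost periodic, its orbit under translations is totally bounded, so
`ν ↦ T_ν f` is continuous from `Δ(A)` into `BUC(ℝ^N)` with the sup norm. The Dirac masses are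
dense in `Δ(A)`: were `μ` far from every `δ_a` on `g₁, …, gₙ`, the function
`∑ |gᵢ - μ gᵢ|²` would be an element of `A` bounded below by a positive constant and yet
killed by `μ`. Hence `T_μ f` is a uniform limit of translates of `f`, so `A` is introverted;
the Arens product is jointly continuous; and `Δ(A)` is a compact Hausdorff monoid in which the
units `δ_a` are dense, hence a group with continuous inversion.

(⇒) On the compact space `Δ(A)`, joint continuity of `(ρ, σ) ↦ (ρσ)(f)` makes it uniformly
continuous in `σ`, uniformly in `ρ`. Taking `ρ = δ_x` shows that `σ ↦ T_σ f` is continuous into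
`BUC(ℝ^N)`, so the translates `T_{δ_a} f = f(· + a)` lie in the compact image of `Δ(A)`.
-/

section CompactMonoid

variable {M : Type*} [Monoid M] [TopologicalSpace M] [ContinuousMul M] [CompactSpace M]
  [T2Space M]

theorem isUnit_of_dense_setOf_isUnit (hdense : Dense {x : M | IsUnit x}) (x : M) : IsUnit x := by
  have : (comap ((↑) : Mˣ → M) (𝓝 x)).NeBot := comap_neBot fun t ht => by
    obtain ⟨_, ⟨u, rfl⟩, hyt⟩ := hdense.inter_nhds_nonempty ht
    exact ⟨u, hyt⟩
  set U := Ultrafilter.of (comap ((↑) : Mˣ → M) (𝓝 x))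
  have hval : Tendsto ((↑) : Mˣ → M) U (𝓝 x) := tendsto_comap.mono_left (Ultrafilter.of_le _)
  obtain ⟨y, -, hinv : Tendsto (fun u : Mˣ => ((u⁻¹ : Mˣ) : M)) U (𝓝 y)⟩ :=
    isCompact_univ.ultrafilter_le_nhds (U.map fun u => ((u⁻¹ : Mˣ) : M)) (by simp)
  have hxy : x * y = 1 := tendsto_nhds_unique (hval.mul hinv) (by simp)
  have hyx : y * x = 1 := tendsto_nhds_unique (hinv.mul hval) (by simp)
  exact ⟨⟨x, y, hxy, hyx⟩, rfl⟩

theorem continuous_of_mul_eq_one {inv : M → M} (hinv : ∀ x, x * inv x = 1 ∧ inv x * x = 1) :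
    Continuous inv := by
  refine continuous_iff_continuousAt.2 fun x => tendsto_nhds_of_unique_mapClusterPt fun y hy => ?_
  obtain ⟨U, hUx, hUy⟩ := mapClusterPt_iff_ultrafilter.1 hy
  have hxy : x * y = 1 :=
    tendsto_nhds_unique ((tendsto_id.mono_left hUx).mul hUy) (by simp [hinv])
  exact (left_inv_eq_right_inv (hinv x).2 hxy).symm

end CompactMonoid

theorem IsAP.exists_finset_dist_lt {N : ℕ} {f : RN N → ℂ} (hf : IsAP f) {ε : ℝ} (hε : 0 < ε) :
    ∃ t : Finset (RN N), ∀ x, ∃ b ∈ t, ∀ z, dist (f (z + x)) (f (z + b)) < ε := by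
  obtain ⟨F, rfl, hK⟩ := hf
  have hcover : closure (Set.range (translateBCF F)) ⊆
      ⋃ a, Metric.ball (translateBCF F a) ε := fun G hG => by
    obtain ⟨_, ⟨a, rfl⟩, hGa⟩ := Metric.mem_closure_iff.1 hG ε hε
    exact Set.mem_iUnion.2 ⟨a, Metric.mem_ball.2 hGa⟩
  obtain ⟨t, ht⟩ := hK.elim_finite_subcover _ (fun _ => Metric.isOpen_ball) hcover
  refine ⟨t, fun x => ?_⟩
  obtain ⟨b, hb, hxb⟩ := Set.mem_iUnion₂.1 (ht (subset_closure ⟨x, rfl⟩))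
  exact ⟨b, hb, fun z => (BoundedContinuousFunction.dist_coe_le_dist z).trans_lt hxb⟩

def IsBUC.toBCF {N : ℕ} {f : RN N → ℂ} (hf : IsBUC f) : BoundedContinuousFunction (RN N) ℂ :=
  ⟨⟨f, hf.2.continuous⟩, Metric.isBounded_range_iff.1 hf.1⟩

@[simp] theorem IsBUC.coe_toBCF {N : ℕ} {f : RN N → ℂ} (hf : IsBUC f) : ⇑hf.toBCF = f := rfl

namespace MVAlgebra

variable {N : ℕ} (A : MVAlgebra N)

def toStarSubalgebra : StarSubalgebra ℂ (RN N → ℂ) where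
  carrier := A.carrier
  mul_mem' {f g} hf hg := A.mul_mem f hf g hg
  add_mem' {f g} hf hg := A.add_mem f hf g hg
  algebraMap_mem' := A.const_mem
  star_mem' {f} hf := A.conj_mem f hf

theorem exists_norm_le {f : RN N → ℂ} (hf : f ∈ A.carrier) : ∃ C, ∀ x, ‖f x‖ ≤ C := by
  obtain ⟨C, hC⟩ := isBounded_iff_forall_norm_le.1 (A.buc f hf).1
  exact ⟨C, fun x => hC _ ⟨x, rfl⟩⟩

end MVAlgebra

namespace Spectrum'

variable {N : ℕ} {A : MVAlgebra N}

theorem apply_add (μ : Spectrum' A) {f g : RN N → ℂ} (hf : f ∈ A.carrier) (hg : g ∈ A.carrier) :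
    μ.1 (f + g) = μ.1 f + μ.1 g :=
  μ.2.1 f hf g hg

theorem apply_smul (μ : Spectrum' A) (c : ℂ) {f : RN N → ℂ} (hf : f ∈ A.carrier) :
    μ.1 (c • f) = c * μ.1 f :=
  μ.2.2.1 c f hf

theorem apply_mul (μ : Spectrum' A) {f g : RN N → ℂ} (hf : f ∈ A.carrier) (hg : g ∈ A.carrier) :
    μ.1 (f * g) = μ.1 f * μ.1 g :=
  μ.2.2.2.1 f hf g hg

def toAlgHom (μ : Spectrum' A) : A.toStarSubalgebra →ₐ[ℂ] ℂ :=
  AlgHom.ofLinearMap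
    { toFun := fun f => μ.1 f
      map_add' := fun f g => μ.apply_add f.2 g.2
      map_smul' := fun c f => μ.apply_smul c f.2 }
    μ.2.2.2.2.1 (fun f g => μ.apply_mul f.2 g.2)

theorem toAlgHom_apply (μ : Spectrum' A) (f : A.toStarSubalgebra) :
    μ.toAlgHom f = μ.1 f := rfl

theorem apply_const (μ : Spectrum' A) (c : ℂ) : μ.1 (fun _ => c) = c :=
  μ.toAlgHom.commutes c

theorem apply_eq_zero_of_notMem (μ : Spectrum' A) {f : RN N → ℂ} (hf : f ∉ A.carrier) : μ.1 f = 0 :=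
  μ.2.2.2.2.2.1 f hf

theorem norm_apply_le (μ : Spectrum' A) {f : RN N → ℂ} (hf : f ∈ A.carrier) {C : ℝ}
    (hC : ∀ x, ‖f x‖ ≤ C) : ‖μ.1 f‖ ≤ C :=
  μ.2.2.2.2.2.2 f hf C hC

theorem dist_apply_le (μ : Spectrum' A) {f g : RN N → ℂ} (hf : f ∈ A.carrier)
    (hg : g ∈ A.carrier) {C : ℝ} (hC : ∀ x, dist (f x) (g x) ≤ C) :
    dist (μ.1 f) (μ.1 g) ≤ C := by
  rw [dist_eq_norm, ← μ.toAlgHom_apply ⟨f, hf⟩, ← μ.toAlgHom_apply ⟨g, hg⟩, ← map_sub]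
  exact μ.norm_apply_le (sub_mem hf hg : f - g ∈ A.toStarSubalgebra) fun x => by
    simpa [dist_eq_norm] using hC x

theorem ext_of_forall_mem {μ ν : Spectrum' A} (h : ∀ f ∈ A.carrier, μ.1 f = ν.1 f) : μ = ν := by
  refine Subtype.ext (funext fun f => ?_)
  by_cases hf : f ∈ A.carrier
  · exact h f hf
  · rw [μ.apply_eq_zero_of_notMem hf, ν.apply_eq_zero_of_notMem hf]

theorem continuous_apply (f : RN N → ℂ) : Continuous fun μ : Spectrum' A => μ.1 f :=
  (_root_.continuous_apply f).comp continuous_subtype_val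

end Spectrum'

namespace MVAlgebra

variable {N : ℕ} (A : MVAlgebra N)

theorem isClosed_setOf_isCharacter : IsClosed {μ | IsCharacter A μ} := by
  simp only [IsCharacter, Set.ofPred_and, Set.ofPred_forall]
  refine .inter ?_ (.inter ?_ (.inter ?_ (.inter ?_ (.inter ?_ ?_))))
  all_goals
    repeat' (first | intro _ | apply isClosed_iInter | apply isClosed_eq | apply isClosed_le)
  all_goals fun_prop

theorem exists_forall_norm_apply_le (f : RN N → ℂ) : ∃ C, ∀ μ : Spectrum' A, ‖μ.1 f‖ ≤ C := by
  by_cases hf : f ∈ A.carrier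
  · obtain ⟨C, hC⟩ := A.exists_norm_le hf
    exact ⟨C, fun μ => μ.norm_apply_le hf hC⟩
  · exact ⟨0, fun μ => by simp [μ.apply_eq_zero_of_notMem hf]⟩

instance : CompactSpace (Spectrum' A) := by
  choose C hC using A.exists_forall_norm_apply_le
  refine isCompact_iff_compactSpace.1 <|
    (isCompact_univ_pi fun f => isCompact_closedBall (0 : ℂ) (C f)).of_isClosed_subset
      A.isClosed_setOf_isCharacter fun μ hμ f _ => ?_
  simpa using hC f ⟨μ, hμ⟩

open Classical in
theorem isCharacter_ite {φ : (RN N → ℂ) → ℂ}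
    (hadd : ∀ f ∈ A.carrier, ∀ g ∈ A.carrier, φ (f + g) = φ f + φ g)
    (hsmul : ∀ (c : ℂ), ∀ f ∈ A.carrier, φ (c • f) = c * φ f)
    (hmul : ∀ f ∈ A.carrier, ∀ g ∈ A.carrier, φ (f * g) = φ f * φ g)
    (hone : φ (fun _ => 1) = 1)
    (hbound : ∀ f ∈ A.carrier, ∀ C : ℝ, (∀ x, ‖f x‖ ≤ C) → ‖φ f‖ ≤ C) :
    IsCharacter A fun f => if f ∈ A.carrier then φ f else 0 := by
  refine ⟨fun f hf g hg => ?_, fun c f hf => ?_, fun f hf g hg => ?_, ?_, fun f hf => ?_,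
    fun f hf C hC => ?_⟩
  · simp [hf, hg, A.add_mem f hf g hg, hadd f hf g hg]
  · simp [hf, A.smul_mem c f hf, hsmul c f hf]
  · simp [hf, hg, A.mul_mem f hf g hg, hmul f hf g hg]
  · simp [A.const_mem 1, hone]
  · simp [hf]
  · simpa [hf] using hbound f hf C hC

def dirac (y : RN N) : Spectrum' A :=
  ⟨diracFun A y, A.isCharacter_ite (fun _ _ _ _ => rfl) (fun _ _ _ => rfl) (fun _ _ _ _ => rfl) rfl
    fun _ _ _ hC => hC y⟩

theorem dirac_apply (y : RN N) {f : RN N → ℂ} (hf : f ∈ A.carrier) : (A.dirac y).1 f = f y := by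
  simp [dirac, diracFun, hf]

theorem exists_forall_dist_apply_lt {ι : Type*} [Finite ι] (μ : Spectrum' A)
    {g : ι → RN N → ℂ} (hg : ∀ i, g i ∈ A.carrier) {ε : ι → ℝ} (hε : ∀ i, 0 < ε i) :
    ∃ a, ∀ i, dist (μ.1 (g i)) (g i a) < ε i := by
  cases nonempty_fintype ι
  by_contra! hfar
  set h : ι → A.toStarSubalgebra := fun i => ⟨g i, hg i⟩ - algebraMap ℂ _ (μ.1 (g i))
  set G : A.toStarSubalgebra := ∑ i, ((ε i : ℂ) ^ 2)⁻¹ • (star (h i) * h i)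
  set r : RN N → ℝ := fun x => ∑ i, (‖g i x - μ.1 (g i)‖ / ε i) ^ 2
  have hμh : ∀ i, μ.toAlgHom (h i) = 0 := fun i => by
    rw [map_sub, AlgHom.commutes]
    exact sub_self _
  have hμG : μ.1 G = 0 := by
    rw [← μ.toAlgHom_apply, map_sum]
    exact Finset.sum_eq_zero fun i _ => by rw [map_smul, map_mul, hμh, mul_zero, smul_zero]
  have hG : ∀ x, (G : RN N → ℂ) x = r x := by
    intro x
    simp [G, h, r, ← map_sub, Complex.conj_mul', div_eq_inv_mul, mul_pow, inv_pow]
  have hr : ∀ x, 1 ≤ r x := fun x => by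
    obtain ⟨i, hi⟩ := hfar x
    calc 1 ≤ (‖g i x - μ.1 (g i)‖ / ε i) ^ 2 :=
          one_le_pow₀ ((one_le_div (hε i)).2 (by rwa [← dist_eq_norm, dist_comm]))
      _ ≤ r x := Finset.single_le_sum (f := fun j => (‖g j x - μ.1 (g j)‖ / ε j) ^ 2)
          (fun j _ => sq_nonneg _) (Finset.mem_univ i)
  -- `1 ≤ G ≤ C` gives `‖G - C‖ ≤ C - 1`, whereas `μ (G - C) = -C`.
  obtain ⟨C, hC⟩ := A.exists_norm_le G.2
  have hrC : ∀ x, r x ≤ C := fun x => by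
    simpa [hG, abs_of_nonneg (zero_le_one.trans (hr x))] using hC x
  have hdist := μ.dist_apply_le G.2 (A.const_mem C) (C := C - 1) fun x => by
    rw [hG, Complex.dist_eq, ← Complex.ofReal_sub, Complex.norm_real, Real.norm_eq_abs,
      abs_of_nonpos] <;> linarith [hr x, hrC x]
  rw [hμG, μ.apply_const, dist_zero_left, Complex.norm_real, Real.norm_eq_abs] at hdist
  linarith [le_abs_self C]

theorem denseRange_dirac : DenseRange A.dirac := by
  refine fun μ => mem_closure_iff_nhds.2 fun t ht => ?_
  rw [nhds_subtype_eq_comap, Filter.mem_comap, nhds_pi] at ht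
  obtain ⟨U, hU, hUt⟩ := ht
  obtain ⟨I, hI, V, hV, hIV⟩ := Filter.mem_pi.1 hU
  choose ε hε hεV using fun f => Metric.mem_nhds_iff.1 (hV f)
  have : Finite ↥(I ∩ A.carrier) := (hI.subset Set.inter_subset_left).to_subtype
  obtain ⟨a, ha⟩ := A.exists_forall_dist_apply_lt μ (g := fun f : ↥(I ∩ A.carrier) => f.1)
    (fun f => f.2.2) (fun f => hε f.1)
  refine ⟨A.dirac a, hUt (hIV fun f hfI => ?_), a, rfl⟩
  by_cases hf : f ∈ A.carrier
  · refine hεV f ?_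
    rw [Metric.mem_ball, A.dirac_apply a hf, dist_comm]
    exact ha ⟨f, hfI, hf⟩
  · change (A.dirac a).1 f ∈ V f
    rw [(A.dirac a).apply_eq_zero_of_notMem hf, ← μ.apply_eq_zero_of_notMem hf]
    exact mem_of_mem_nhds (hV f)

end MVAlgebra

namespace Spectrum'

variable {N : ℕ} {A : MVAlgebra N}

def convolve (ν : Spectrum' A) (f : RN N → ℂ) : RN N → ℂ := fun x => ν.1 fun z => f (z + x)

theorem convolve_add (ν : Spectrum' A) {f g : RN N → ℂ} (hf : f ∈ A.carrier)
    (hg : g ∈ A.carrier) : ν.convolve (f + g) = ν.convolve f + ν.convolve g :=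
  funext fun x => ν.apply_add (A.translate_mem f hf x) (A.translate_mem g hg x)

theorem convolve_smul (ν : Spectrum' A) (c : ℂ) {f : RN N → ℂ} (hf : f ∈ A.carrier) :
    ν.convolve (c • f) = c • ν.convolve f :=
  funext fun x => ν.apply_smul c (A.translate_mem f hf x)

theorem convolve_mul (ν : Spectrum' A) {f g : RN N → ℂ} (hf : f ∈ A.carrier)
    (hg : g ∈ A.carrier) : ν.convolve (f * g) = ν.convolve f * ν.convolve g :=
  funext fun x => ν.apply_mul (A.translate_mem f hf x) (A.translate_mem g hg x)

theorem convolve_const (ν : Spectrum' A) (c : ℂ) : ν.convolve (fun _ => c) = fun _ => c :=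
  funext fun _ => ν.apply_const c

theorem convolve_dirac (a : RN N) {f : RN N → ℂ} (hf : f ∈ A.carrier) :
    (A.dirac a).convolve f = fun x => f (x + a) :=
  funext fun x => by rw [convolve, A.dirac_apply a (A.translate_mem f hf x), add_comm]

theorem convolve_translate (ν : Spectrum' A) (f : RN N → ℂ) (x : RN N) :
    (fun z => ν.convolve f (z + x)) = ν.convolve fun z => f (z + x) := by
  funext z
  simp only [convolve, add_assoc]

theorem tendstoUniformly_convolve {f : RN N → ℂ} (hf : f ∈ A.carrier) (hAP : IsAP f)
    (ν₀ : Spectrum' A) :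
    TendstoUniformly (fun ν : Spectrum' A => ν.convolve f) (ν₀.convolve f) (𝓝 ν₀) := by
  refine Metric.tendstoUniformly_iff.2 fun ε hε => ?_
  obtain ⟨t, ht⟩ := hAP.exists_finset_dist_lt (by positivity : 0 < ε / 3)
  have hnear : ∀ᶠ ν in 𝓝 ν₀, ∀ b ∈ t,
      dist (ν.1 fun z => f (z + b)) (ν₀.1 fun z => f (z + b)) < ε / 3 :=
    (eventually_all_finset t).2 fun b _ =>
      ((continuous_apply _).tendsto ν₀).eventually (Metric.ball_mem_nhds _ (by positivity))
  filter_upwards [hnear] with ν hν x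
  obtain ⟨b, hb, hxb⟩ := ht x
  have hx := A.translate_mem f hf x
  have hb' := A.translate_mem f hf b
  have h₀ := ν₀.dist_apply_le hx hb' fun z => (hxb z).le
  have h₁ := ν.dist_apply_le hb' hx fun z => (dist_comm (f (z + b)) _ ▸ hxb z).le
  calc dist (ν₀.1 fun z => f (z + x)) (ν.1 fun z => f (z + x))
      ≤ dist (ν₀.1 fun z => f (z + x)) (ν₀.1 fun z => f (z + b)) +
        dist (ν₀.1 fun z => f (z + b)) (ν.1 fun z => f (z + b)) +
        dist (ν.1 fun z => f (z + b)) (ν.1 fun z => f (z + x)) := dist_triangle4 _ _ _ _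
    _ < ε := by linarith [dist_comm (ν.1 fun z => f (z + b)) (ν₀.1 fun z => f (z + b)), hν b hb]

theorem continuous_apply_of_tendstoUniformly {X : Type*} [TopologicalSpace X]
    {F : X → RN N → ℂ} (hF : ∀ x, F x ∈ A.carrier) (hFu : ∀ x, TendstoUniformly F (F x) (𝓝 x)) :
    Continuous fun p : Spectrum' A × X => p.1.1 (F p.2) := by
  refine continuous_iff_continuousAt.2 fun ⟨μ₀, x₀⟩ => Metric.tendsto_nhds.2 fun ε hε => ?_
  have hunif : ∀ᶠ p : Spectrum' A × X in 𝓝 (μ₀, x₀), ∀ y, dist (F x₀ y) (F p.2 y) < ε / 2 :=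
    (continuous_snd.tendsto (μ₀, x₀)).eventually
      (Metric.tendstoUniformly_iff.1 (hFu x₀) _ (by positivity))
  have hweak : ∀ᶠ p : Spectrum' A × X in 𝓝 (μ₀, x₀), dist (p.1.1 (F x₀)) (μ₀.1 (F x₀)) < ε / 2 :=
    (((continuous_apply _).comp continuous_fst).tendsto (μ₀, x₀)).eventually
      (Metric.ball_mem_nhds _ (by positivity))
  filter_upwards [hunif, hweak] with p hp₁ hp₂
  have := p.1.dist_apply_le (hF p.2) (hF x₀) fun y => (dist_comm (F x₀ y) _ ▸ hp₁ y).le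
  calc dist (p.1.1 (F p.2)) (μ₀.1 (F x₀))
      ≤ dist (p.1.1 (F p.2)) (p.1.1 (F x₀)) + dist (p.1.1 (F x₀)) (μ₀.1 (F x₀)) :=
        dist_triangle _ _ _
    _ < ε := by linarith

end Spectrum'

theorem Introverted.convolve_mem {N : ℕ} {A : MVAlgebra N} (hI : Introverted A) (ν : Spectrum' A)
    {f : RN N → ℂ} (hf : f ∈ A.carrier) : ν.convolve f ∈ A.carrier :=
  hI ν f hf

namespace MVAlgebra

variable {N : ℕ} (A : MVAlgebra N)

theorem introverted_of_isAP (hAP : ∀ f ∈ A.carrier, IsAP f) : Introverted A := by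
  intro μ f hf
  refine A.closed _ fun ε hε => ?_
  have hnear := Metric.tendstoUniformly_iff.1 (Spectrum'.tendstoUniformly_convolve hf (hAP f hf) μ)
    ε hε
  obtain ⟨_, ⟨a, rfl⟩, ha⟩ := A.denseRange_dirac.inter_nhds_nonempty hnear
  refine ⟨fun x => f (x + a), A.translate_mem f hf a, fun x => ?_⟩
  rw [← dist_eq_norm, ← Spectrum'.convolve_dirac a hf]
  exact (ha x).le

theorem isAP_of_continuous_isArensMul (hI : Introverted A)
    {mul : Spectrum' A → Spectrum' A → Spectrum' A} (harens : IsArensMul A mul)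
    (hcont : Continuous fun p : Spectrum' A × Spectrum' A => mul p.1 p.2)
    {f : RN N → ℂ} (hf : f ∈ A.carrier) : IsAP f := by
  have hconv : ∀ σ : Spectrum' A, σ.convolve f = fun x => (mul (A.dirac x) σ).1 f :=
    fun σ => funext fun x => by
      rw [harens _ _ f hf]
      exact (A.dirac_apply x (hI.convolve_mem σ hf)).symm
  let Φ (σ : Spectrum' A) := (A.buc _ (hI.convolve_mem σ hf)).toBCF
  have hΦ : Continuous Φ := continuous_iff_continuousAt.2 fun σ =>
    BoundedContinuousFunction.tendsto_iff_tendstoUniformly.2 <| by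
      simpa [Φ, hconv, Function.comp_def] using
        ((Spectrum'.continuous_apply f).comp (hcont.comp continuous_swap)).tendstoUniformly
          (fun σ ρ => (mul ρ σ).1 f) σ |>.comp A.dirac
  refine ⟨(A.buc f hf).toBCF, rfl, (isCompact_range hΦ).of_isClosed_subset isClosed_closure
    (closure_minimal ?_ (isCompact_range hΦ).isClosed)⟩
  rintro _ ⟨a, rfl⟩
  exact ⟨A.dirac a, BoundedContinuousFunction.ext fun x => by
    simp [Φ, translateBCF, Spectrum'.convolve_dirac a hf]⟩

variable (hI : Introverted A)

open Classical in
def arensMul (μ ν : Spectrum' A) : Spectrum' A :=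
  ⟨fun f => if f ∈ A.carrier then μ.1 (ν.convolve f) else 0, by
    have hT {f} (hf : f ∈ A.carrier) := hI.convolve_mem ν hf
    refine A.isCharacter_ite (fun f hf g hg => ?_) (fun c f hf => ?_) (fun f hf g hg => ?_) ?_
      fun f hf C hC => μ.norm_apply_le (hT hf) fun x =>
        ν.norm_apply_le (A.translate_mem f hf x) fun z => hC (z + x)
    · rw [ν.convolve_add hf hg, μ.apply_add (hT hf) (hT hg)]
    · rw [ν.convolve_smul c hf, μ.apply_smul c (hT hf)]
    · rw [ν.convolve_mul hf hg, μ.apply_mul (hT hf) (hT hg)]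
    · rw [ν.convolve_const, μ.apply_const]⟩

theorem arensMul_apply (μ ν : Spectrum' A) {f : RN N → ℂ} (hf : f ∈ A.carrier) :
    (A.arensMul hI μ ν).1 f = μ.1 (ν.convolve f) :=
  if_pos hf

theorem isArensMul_arensMul : IsArensMul A (A.arensMul hI) :=
  fun μ ν _ hf => A.arensMul_apply hI μ ν hf

theorem arensMul_assoc (μ ν ρ : Spectrum' A) :
    A.arensMul hI (A.arensMul hI μ ν) ρ = A.arensMul hI μ (A.arensMul hI ν ρ) := by
  refine Spectrum'.ext_of_forall_mem fun f hf => ?_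
  have hconv : ν.convolve (ρ.convolve f) = (A.arensMul hI ν ρ).convolve f := funext fun x => by
    simp only [Spectrum'.convolve, ← Spectrum'.convolve_translate,
      A.arensMul_apply hI ν ρ (A.translate_mem f hf x)]
  rw [A.arensMul_apply hI _ _ hf, A.arensMul_apply hI _ _ (hI.convolve_mem ρ hf),
    A.arensMul_apply hI _ _ hf, hconv]

theorem dirac_mul_dirac (a b : RN N) :
    A.arensMul hI (A.dirac a) (A.dirac b) = A.dirac (a + b) :=
  Spectrum'.ext_of_forall_mem fun f hf => by
    rw [A.arensMul_apply hI _ _ hf, Spectrum'.convolve_dirac b hf,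
      A.dirac_apply a (A.translate_mem f hf b), A.dirac_apply _ hf]

theorem dirac_zero_arensMul (μ : Spectrum' A) : A.arensMul hI (A.dirac 0) μ = μ :=
  Spectrum'.ext_of_forall_mem fun f hf => by
    rw [A.arensMul_apply hI _ _ hf, A.dirac_apply 0 (hI.convolve_mem μ hf)]
    simp only [Spectrum'.convolve, add_zero]

theorem arensMul_dirac_zero (μ : Spectrum' A) : A.arensMul hI μ (A.dirac 0) = μ :=
  Spectrum'.ext_of_forall_mem fun f hf => by
    rw [A.arensMul_apply hI _ _ hf, Spectrum'.convolve_dirac 0 hf]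
    simp only [add_zero]

abbrev arensMonoid : Monoid (Spectrum' A) where
  mul := A.arensMul hI
  one := A.dirac 0
  mul_assoc := A.arensMul_assoc hI
  one_mul := A.dirac_zero_arensMul hI
  mul_one := A.arensMul_dirac_zero hI

theorem continuous_arensMul (hAP : ∀ f ∈ A.carrier, IsAP f) :
    Continuous fun p : Spectrum' A × Spectrum' A => A.arensMul hI p.1 p.2 := by
  refine continuous_induced_rng.2 (continuous_pi fun f => ?_)
  by_cases hf : f ∈ A.carrier
  · simp only [Function.comp_def, A.arensMul_apply hI _ _ hf]
    exact Spectrum'.continuous_apply_of_tendstoUniformly (fun ν => hI.convolve_mem ν hf)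
      (Spectrum'.tendstoUniformly_convolve hf (hAP f hf))
  · simp only [Function.comp_def, Spectrum'.apply_eq_zero_of_notMem _ hf]
    exact continuous_const

end MVAlgebra

/-- For an algebra with mean value `A`, the spectrum `Δ(A)` is a
(compact) topological group under the Arens product — which requires `A` to be
introverted for the product to be defined — if and only if `A` is a (closed)
subalgebra of the almost periodic functions. -/
theorem stmt8 {N : ℕ} (A : MVAlgebra N) :
    (Introverted A ∧
      ∃ mul : Spectrum' A → Spectrum' A → Spectrum' A,
        IsArensMul A mul ∧
        (∀ μ ν ρ : Spectrum' A, mul (mul μ ν) ρ = mul μ (mul ν ρ)) ∧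
        Continuous (fun p : Spectrum' A × Spectrum' A => mul p.1 p.2) ∧
        ∃ e : Spectrum' A, (∀ μ, mul e μ = μ ∧ mul μ e = μ) ∧
          ∃ inv : Spectrum' A → Spectrum' A, Continuous inv ∧
            ∀ μ, mul μ (inv μ) = e ∧ mul (inv μ) μ = e)
    ↔ (∀ f ∈ A.carrier, IsAP f) := by
  constructor
  · rintro ⟨hI, mul, harens, -, hcont, -⟩ f hf
    exact A.isAP_of_continuous_isArensMul hI harens hcont hf
  · intro hAP
    have hI := A.introverted_of_isAP hAP
    let _ := A.arensMonoid hI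
    have : ContinuousMul (Spectrum' A) := ⟨A.continuous_arensMul hI hAP⟩
    have hdirac (a : RN N) : IsUnit (A.dirac a) :=
      ⟨⟨A.dirac a, A.dirac (-a), (A.dirac_mul_dirac hI a (-a)).trans (by rw [add_neg_cancel]; rfl),
        (A.dirac_mul_dirac hI (-a) a).trans (by rw [neg_add_cancel]; rfl)⟩, rfl⟩
    have hunit : ∀ μ : Spectrum' A, IsUnit μ := isUnit_of_dense_setOf_isUnit <|
      A.denseRange_dirac.mono (Set.range_subset_iff.2 hdirac)
    have hinv (μ : Spectrum' A) := And.intro (hunit μ).mul_val_inv (hunit μ).val_inv_mul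
    exact ⟨hI, (· * ·), A.isArensMul_arensMul hI, mul_assoc, continuous_mul, 1,
      fun μ => ⟨one_mul μ, mul_one μ⟩, _, continuous_of_mul_eq_one hinv, hinv⟩
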